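/- Let D be an eulerian digraph and let s, t be distinct vertices such that every edge cut of the underlying undirected graph separating s and t has at least 4 edges. Then D has a directed euler circuit that interlaces s and t, i.e., a directed euler circuit whose cyclic vertex sequence contains occurrences of s, t, s, t in that cyclic order. -/

import Mathlib

/-- Directed walks in a digraph given by source/target maps. -/
def IsDiWalk {V A : Type} (src tgt : A → V) : V → V → List A → Prop
  | s, t, [] => s = t
  | s, t, a :: l => src a = s ∧ IsDiWalk src tgt (tgt a) t l

/-!
Balance forces every cut to carry as many arcs out of its `s`-side as into it, so each set
containing `s` but not `t` is left by at least two arcs. Augmenting paths then give an arc set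
`F` of net outflow `2` at `s`, `-2` at `t` and `0` elsewhere, and by balance its complement has
net outflow `2` at `t` and `-2` at `s`. Each of the two decomposes into two arc-disjoint trails,
`P₁, P₂` from `s` to `t` inside `F` and `Q₁, Q₂` from `t` to `s` outside it, so `P₁ Q₁ P₂ Q₂` is
a closed trail visiting `s, t, s, t`; Hierholzer's splicing extends it to an euler circuit.
-/

open Finset

namespace IsDiWalk

variable {V A : Type} {src tgt : A → V}

theorem append {x y z : V} {l₁ l₂ : List A} (h₁ : IsDiWalk src tgt x y l₁)
    (h₂ : IsDiWalk src tgt y z l₂) : IsDiWalk src tgt x z (l₁ ++ l₂) := by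
  induction l₁ generalizing x with
  | nil => cases h₁; exact h₂
  | cons a l ih => exact ⟨h₁.1, ih h₁.2⟩

theorem of_append {x z : V} {l₁ l₂ : List A} (h : IsDiWalk src tgt x z (l₁ ++ l₂)) :
    ∃ y, IsDiWalk src tgt x y l₁ ∧ IsDiWalk src tgt y z l₂ := by
  induction l₁ generalizing x with
  | nil => exact ⟨x, rfl, h⟩
  | cons a l ih =>
    obtain ⟨y, h₁, h₂⟩ := ih h.2
    exact ⟨y, ⟨h.1, h₁⟩, h₂⟩

theorem exists_eq_append_of_mem {x y v : V} {l : List A} (h : IsDiWalk src tgt x y l)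
    (hv : v ∈ x :: l.map tgt) :
    ∃ l₁ l₂, l = l₁ ++ l₂ ∧ IsDiWalk src tgt x v l₁ ∧ IsDiWalk src tgt v y l₂ := by
  induction l generalizing x with
  | nil =>
    obtain rfl := List.mem_singleton.1 hv
    exact ⟨[], [], rfl, rfl, h⟩
  | cons a l ih =>
    rcases List.mem_cons.1 hv with rfl | hv
    · exact ⟨[], a :: l, rfl, rfl, h⟩
    · obtain ⟨l₁, l₂, rfl, h₁, h₂⟩ := ih h.2 hv
      exact ⟨a :: l₁, l₂, rfl, ⟨h.1, h₁⟩, h₂⟩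

theorem mem_map_tgt {x y : V} {l : List A} (h : IsDiWalk src tgt x y l) (hxy : x ≠ y) :
    y ∈ l.map tgt := by
  induction l generalizing x with
  | nil => exact absurd h hxy
  | cons a l ih =>
    by_cases ha : tgt a = y
    · simp [ha]
    · exact List.mem_cons_of_mem _ (ih h.2 ha)

theorem exists_nodup_sublist {x y : V} {l : List A} (h : IsDiWalk src tgt x y l) :
    ∃ l', IsDiWalk src tgt x y l' ∧ l'.Nodup ∧ l'.Sublist l := by
  induction l generalizing x with
  | nil => exact ⟨[], h, List.nodup_nil, .slnil⟩
  | cons a l ih =>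
    obtain ⟨l', h', hnd, hsub⟩ := ih h.2
    by_cases ha : a ∈ l'
    · obtain ⟨l₁, l₂, rfl⟩ := List.append_of_mem ha
      obtain ⟨_, -, h₂⟩ := of_append h'
      exact ⟨a :: l₂, ⟨h.1, h₂.2⟩, hnd.sublist (List.sublist_append_right _ _),
        ((List.sublist_append_right _ _).trans hsub).cons a⟩
    · exact ⟨a :: l', ⟨h.1, h'⟩, List.nodup_cons.2 ⟨ha, hnd⟩, hsub.cons_cons a⟩

theorem exists_of_reflTransGen {R : Set A} {x y : V}
    (h : Relation.ReflTransGen (fun u v => ∃ a ∈ R, src a = u ∧ tgt a = v) x y) :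
    ∃ l, IsDiWalk src tgt x y l ∧ ∀ a ∈ l, a ∈ R := by
  induction h with
  | refl => exact ⟨[], rfl, by simp⟩
  | tail _ hstep ih =>
    obtain ⟨l, hl, hlR⟩ := ih
    obtain ⟨a, haR, rfl, rfl⟩ := hstep
    refine ⟨l ++ [a], hl.append ⟨rfl, rfl⟩, ?_⟩
    simpa [or_imp, forall_and] using ⟨hlR, haR⟩

theorem exists_notMem_src {P : V → Prop} {S : List A} {x y : V} {l : List A}
    (h : IsDiWalk src tgt x y l) (hx : P x) (hS : ∀ a ∈ S, P (tgt a)) (hl : ∃ a ∈ l, a ∉ S) :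
    ∃ a ∉ S, P (src a) := by
  induction l generalizing x with
  | nil => simp at hl
  | cons b l ih =>
    by_cases hb : b ∈ S
    · obtain ⟨a, ha, haS⟩ := hl
      rcases List.mem_cons.1 ha with rfl | ha
      · exact absurd hb haS
      · exact ih h.2 (hS b hb) ⟨a, ha, haS⟩
    · exact ⟨b, hb, h.1 ▸ hx⟩

end IsDiWalk

section NetOutflow

variable {V A : Type} [DecidableEq V] (src tgt : A → V)

def netOutflow (F : Finset A) : V → ℤ :=
  ∑ a ∈ F, (Pi.single (src a) 1 - Pi.single (tgt a) 1)

variable {src tgt}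

theorem netOutflow_apply (F : Finset A) (v : V) :
    netOutflow src tgt F v = #{a ∈ F | src a = v} - #{a ∈ F | tgt a = v} := by
  simp [netOutflow, Finset.sum_apply, Pi.single_apply, sum_boole, eq_comm]

theorem netOutflow_empty : netOutflow src tgt (∅ : Finset A) = 0 := sum_empty

theorem netOutflow_union [DecidableEq A] {F G : Finset A} (h : Disjoint F G) :
    netOutflow src tgt (F ∪ G) = netOutflow src tgt F + netOutflow src tgt G :=
  sum_union h

theorem netOutflow_sdiff [DecidableEq A] {F G : Finset A} (h : G ⊆ F) :
    netOutflow src tgt (F \ G) = netOutflow src tgt F - netOutflow src tgt G :=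
  sum_sdiff_eq_sub h

theorem netOutflow_erase [DecidableEq A] {F : Finset A} {a : A} (ha : a ∈ F) :
    netOutflow src tgt (F.erase a) =
      netOutflow src tgt F - (Pi.single (src a) 1 - Pi.single (tgt a) 1) :=
  sum_erase_eq_sub ha

theorem netOutflow_toFinset [DecidableEq A] {x y : V} {l : List A}
    (h : IsDiWalk src tgt x y l) (hl : l.Nodup) :
    netOutflow src tgt l.toFinset = Pi.single x 1 - Pi.single y 1 := by
  rw [netOutflow, List.sum_toFinset _ hl]
  induction l generalizing x with
  | nil => cases h; simp
  | cons a l ih =>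
    rw [List.map_cons, List.sum_cons, ih h.2 (List.nodup_cons.1 hl).2, h.1]
    abel

theorem netOutflow_sumElim (B : Finset (A ⊕ A)) :
    netOutflow (Sum.elim src tgt) (Sum.elim tgt src) B =
      netOutflow src tgt B.toLeft - netOutflow src tgt B.toRight := by
  rw [← B.toLeft_disjSum_toRight, netOutflow, sum_disjSum]
  simp only [toLeft_disjSum, toRight_disjSum, Sum.elim_inl, Sum.elim_inr, netOutflow,
    sub_eq_add_neg (∑ a ∈ _, _), ← sum_neg_distrib, neg_sub]

theorem exists_src_eq_of_netOutflow_pos {F : Finset A} {v : V}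
    (h : 0 < netOutflow src tgt F v) : ∃ a ∈ F, src a = v := by
  rw [netOutflow_apply, sub_pos, Nat.cast_lt] at h
  obtain ⟨a, ha⟩ := card_pos.1 (Nat.zero_lt_of_lt h)
  exact ⟨a, (mem_filter.1 ha).1, (mem_filter.1 ha).2⟩

theorem sum_netOutflow (F : Finset A) (U : Finset V) :
    ∑ v ∈ U, netOutflow src tgt F v =
      #{a ∈ F | src a ∈ U ∧ tgt a ∉ U} - #{a ∈ F | tgt a ∈ U ∧ src a ∉ U} := by
  simp only [netOutflow, Finset.sum_apply, Pi.sub_apply]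
  rw [sum_comm]
  simp only [sum_sub_distrib, sum_pi_single']
  rw [← sum_sub_distrib, ← sum_boole, ← sum_boole, ← sum_sub_distrib]
  refine sum_congr rfl fun a _ => ?_
  by_cases hs : src a ∈ U <;> by_cases ht : tgt a ∈ U <;> simp [hs, ht]

end NetOutflow

section Trails

variable {V A : Type} [DecidableEq V] [DecidableEq A] {src tgt : A → V}

/-- Follow unused arcs of `F` from `w`: the walk can only get stuck at `u`. -/
theorem exists_trail_of_single_le_netOutflow (u : V) (F : Finset A) (w : V)
    (hF : ∀ v ≠ u, (Pi.single w 1 : V → ℤ) v ≤ netOutflow src tgt F v) :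
    ∃ l, IsDiWalk src tgt w u l ∧ l.Nodup ∧ ∀ a ∈ l, a ∈ F := by
  by_cases hwu : w = u
  · exact ⟨[], hwu, List.nodup_nil, by simp⟩
  obtain ⟨a, haF, rfl⟩ := exists_src_eq_of_netOutflow_pos
    (Int.lt_of_add_one_le (by simpa using hF w hwu))
  have hF' : ∀ v ≠ u, (Pi.single (tgt a) 1 : V → ℤ) v ≤ netOutflow src tgt (F.erase a) v := by
    intro v hv
    have := hF v hv
    simp only [netOutflow_erase haF, Pi.sub_apply]
    linarith
  obtain ⟨l, hl, hnd, hlF⟩ := exists_trail_of_single_le_netOutflow u (F.erase a) (tgt a) hF'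
  refine ⟨a :: l, ⟨rfl, hl⟩, List.nodup_cons.2 ⟨fun h => ?_, hnd⟩, ?_⟩
  · exact (mem_erase.1 (hlF a h)).1 rfl
  · simpa [or_imp, forall_and, haF] using fun b hb => mem_of_mem_erase (hlF b hb)
termination_by #F
decreasing_by exact card_erase_lt_of_mem haF

theorem exists_trail_of_netOutflow_eq {F : Finset A} {s t : V} {k : ℤ} (hk : 0 < k)
    (hF : netOutflow src tgt F = Pi.single s k - Pi.single t k) :
    ∃ l, IsDiWalk src tgt s t l ∧ l.Nodup ∧ ∀ a ∈ l, a ∈ F := by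
  refine exists_trail_of_single_le_netOutflow t F s fun v hv => ?_
  simp only [hF, Pi.sub_apply, Pi.single_apply, hv, if_false, sub_zero]
  split_ifs <;> omega

theorem exists_two_trails_of_netOutflow_eq {F : Finset A} {s t : V}
    (hF : netOutflow src tgt F = Pi.single s 2 - Pi.single t 2) :
    ∃ l₁ l₂, IsDiWalk src tgt s t l₁ ∧ IsDiWalk src tgt s t l₂ ∧ (l₁ ++ l₂).Nodup ∧
      ∀ a ∈ l₁ ++ l₂, a ∈ F := by
  obtain ⟨l₁, h₁, hnd₁, hl₁F⟩ := exists_trail_of_netOutflow_eq two_pos hF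
  have hsub : l₁.toFinset ⊆ F := fun a ha => hl₁F a (List.mem_toFinset.1 ha)
  have hF' : netOutflow src tgt (F \ l₁.toFinset) = Pi.single s 1 - Pi.single t 1 := by
    rw [netOutflow_sdiff hsub, hF, netOutflow_toFinset h₁ hnd₁]
    ext v
    simp only [Pi.sub_apply, Pi.single_apply]
    split_ifs <;> norm_num
  obtain ⟨l₂, h₂, hnd₂, hl₂F⟩ := exists_trail_of_netOutflow_eq one_pos hF'
  refine ⟨l₁, l₂, h₁, h₂, List.nodup_append.2 ⟨hnd₁, hnd₂, ?_⟩, ?_⟩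
  · rintro a ha b hb rfl
    exact (mem_sdiff.1 (hl₂F a hb)).2 (List.mem_toFinset.2 ha)
  · simp only [List.mem_append]
    rintro a (ha | ha)
    exacts [hl₁F a ha, (mem_sdiff.1 (hl₂F a ha)).1]

theorem exists_closed_trail_cons {R : Finset A} (hR : netOutflow src tgt R = 0) {a : A}
    (ha : a ∈ R) :
    ∃ l, IsDiWalk src tgt (src a) (src a) (a :: l) ∧ (a :: l).Nodup ∧ ∀ b ∈ a :: l, b ∈ R := by
  have hR' : netOutflow src tgt (R.erase a) = Pi.single (tgt a) 1 - Pi.single (src a) 1 := by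
    rw [netOutflow_erase ha, hR, zero_sub, neg_sub]
  obtain ⟨l, hl, hnd, hlR⟩ := exists_trail_of_netOutflow_eq one_pos hR'
  refine ⟨l, ⟨rfl, hl⟩, List.nodup_cons.2 ⟨fun h => (mem_erase.1 (hlR a h)).1 rfl, hnd⟩, ?_⟩
  simpa [or_imp, forall_and, ha] using fun b hb => mem_of_mem_erase (hlR b hb)

end Trails

section Flows

variable {V A : Type} [Fintype V] [DecidableEq V] [Fintype A] [DecidableEq A] {src tgt : A → V}

/-- The residual digraph has arcs `inl a` for `a ∉ F` (forwards) and `inr a` for `a ∈ F`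
(backwards). If it has a path from `s` to `t`, rerouting `F` along it adds one unit of flow;
otherwise the vertices it reaches from `s` form a cut saturated by `F`, hence of size `k`. -/
theorem exists_netOutflow_eq_succ {F : Finset A} {s t : V} {k : ℕ}
    (hF : netOutflow src tgt F = Pi.single s (k : ℤ) - Pi.single t (k : ℤ))
    (hcut : ∀ U : Finset V, s ∈ U → t ∉ U → k < #{a | src a ∈ U ∧ tgt a ∉ U}) :
    ∃ F' : Finset A, netOutflow src tgt F' = Pi.single s (k + 1 : ℤ) - Pi.single t (k + 1 : ℤ) := by
  classical
  set R : Finset (A ⊕ A) := (univ \ F).disjSum F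
  set reach : V → V → Prop := Relation.ReflTransGen
    fun x y => ∃ b ∈ (R : Set (A ⊕ A)), Sum.elim src tgt b = x ∧ Sum.elim tgt src b = y
  by_cases hreach : reach s t
  · obtain ⟨B₀, hB₀, hB₀R⟩ := IsDiWalk.exists_of_reflTransGen hreach
    obtain ⟨B, hB, hBnd, hBB₀⟩ := hB₀.exists_nodup_sublist
    have hBR : B.toFinset.toLeft ⊆ univ \ F ∧ B.toFinset.toRight ⊆ F :=
      subset_disjSum.1 fun b hb => hB₀R b (hBB₀.mem (List.mem_toFinset.1 hb))
    have hpath := netOutflow_toFinset hB hBnd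
    rw [netOutflow_sumElim] at hpath
    refine ⟨(F \ B.toFinset.toRight) ∪ B.toFinset.toLeft, ?_⟩
    rw [netOutflow_union (disjoint_sdiff.mono sdiff_subset hBR.1), netOutflow_sdiff hBR.2, hF]
    ext v
    have := congrFun hpath v
    simp only [Pi.add_apply, Pi.sub_apply, Pi.single_apply] at this ⊢
    split_ifs at this ⊢ <;> linarith
  · exfalso
    set U : Finset V := {v | reach s v}
    have hsU : s ∈ U := by simpa [U] using Relation.ReflTransGen.refl
    have htU : t ∉ U := by simpa [U] using hreach
    have hclosed : ∀ b ∈ R, Sum.elim src tgt b ∈ U → Sum.elim tgt src b ∈ U := by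
      intro b hb hbU
      simp only [U, mem_filter, mem_univ, true_and] at hbU ⊢
      exact hbU.tail ⟨b, hb, rfl, rfl⟩
    have hout : #{a | src a ∈ U ∧ tgt a ∉ U} = #{a ∈ F | src a ∈ U ∧ tgt a ∉ U} := by
      congr 1
      ext a
      simp only [mem_filter, mem_univ, true_and]
      refine ⟨fun ⟨hs, ht⟩ => ⟨by_contra fun haF => ht ?_, hs, ht⟩, And.right⟩
      exact hclosed (.inl a) (by simp [R, haF]) hs
    have hin : #{a ∈ F | tgt a ∈ U ∧ src a ∉ U} = 0 := by
      refine card_eq_zero.2 (filter_eq_empty_iff.2 fun a haF ⟨ht, hs⟩ => hs ?_)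
      exact hclosed (.inr a) (by simp [R, haF]) ht
    have hsum := sum_netOutflow (src := src) (tgt := tgt) F U
    rw [hF, ← hout, hin] at hsum
    simp only [Pi.sub_apply, sum_sub_distrib, sum_pi_single', hsU, htU] at hsum
    have := hcut U hsU htU
    omega

theorem exists_netOutflow_eq_of_cut {s t : V} (k : ℕ)
    (hcut : ∀ U : Finset V, s ∈ U → t ∉ U → k ≤ #{a | src a ∈ U ∧ tgt a ∉ U}) :
    ∃ F : Finset A, netOutflow src tgt F = Pi.single s (k : ℤ) - Pi.single t (k : ℤ) := by
  induction k with
  | zero => exact ⟨∅, by simp [netOutflow_empty]⟩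
  | succ k ih =>
    obtain ⟨F, hF⟩ := ih fun U hs ht => (hcut U hs ht).trans' k.le_succ
    exact_mod_cast exists_netOutflow_eq_succ hF hcut

end Flows

section Euler

variable {V A : Type} [DecidableEq V] [Fintype A] [DecidableEq A] {src tgt : A → V}

/-- Hierholzer's step: splice into `l` a closed trail of unused arcs that starts on `l`. -/
theorem exists_longer_closed_trail (hbal : netOutflow src tgt univ = 0)
    (hconn : ∀ x y : V, ∃ l : List A, IsDiWalk src tgt x y l) {u : V} {l : List A}
    (h : IsDiWalk src tgt u u l) (hl : l.Nodup) {a : A} (ha : a ∉ l) :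
    ∃ l', IsDiWalk src tgt u u l' ∧ l'.Nodup ∧ l.Sublist l' ∧ l.length < l'.length := by
  have hR : netOutflow src tgt (univ \ l.toFinset) = 0 := by
    rw [netOutflow_sdiff (subset_univ _), hbal, netOutflow_toFinset h hl, sub_self, sub_self]
  obtain ⟨w, hw⟩ := hconn u (src a)
  have hwa : IsDiWalk src tgt u (tgt a) (w ++ [a]) := hw.append ⟨rfl, rfl⟩
  obtain ⟨b, hbl, hb⟩ := hwa.exists_notMem_src (P := (· ∈ u :: l.map tgt)) List.mem_cons_self
      (fun c hc => List.mem_cons_of_mem _ (List.mem_map_of_mem hc)) ⟨a, by simp, ha⟩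
  obtain ⟨l₁, l₂, rfl, h₁, h₂⟩ := h.exists_eq_append_of_mem hb
  obtain ⟨T, hT, hTnd, hTR⟩ := exists_closed_trail_cons hR (a := b) (by simpa using hbl)
  refine ⟨l₁ ++ (b :: T ++ l₂), h₁.append (hT.append h₂), ?_,
    (List.sublist_append_right _ _).append_left l₁, by simp⟩
  rw [(List.perm_append_comm_assoc _ _ _).nodup_iff, List.nodup_append]
  refine ⟨hTnd, hl, fun c hc d hd hcd => ?_⟩
  exact (mem_sdiff.1 (hTR c hc)).2 (List.mem_toFinset.2 (hcd ▸ hd))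

theorem exists_euler_circuit_sublist (hbal : netOutflow src tgt univ = 0)
    (hconn : ∀ x y : V, ∃ l : List A, IsDiWalk src tgt x y l) {u : V} {l : List A}
    (h : IsDiWalk src tgt u u l) (hl : l.Nodup) :
    ∃ L, IsDiWalk src tgt u u L ∧ L.Nodup ∧ (∀ a : A, a ∈ L) ∧ l.Sublist L := by
  by_cases hall : ∀ a : A, a ∈ l
  · exact ⟨l, h, hl, hall, .refl l⟩
  obtain ⟨a, ha⟩ := not_forall.1 hall
  obtain ⟨l', h', hl', hsub, hlen⟩ := exists_longer_closed_trail hbal hconn h hl ha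
  obtain ⟨L, hL, hLnd, hLall, hsub'⟩ := exists_euler_circuit_sublist hbal hconn h' hl'
  exact ⟨L, hL, hLnd, hLall, hsub.trans hsub'⟩
termination_by Fintype.card A - l.length
decreasing_by have := hl'.length_le_card; omega

end Euler

theorem card_cut_eq_two_mul {V A : Type} [DecidableEq V] [Fintype A] [DecidableEq A]
    {src tgt : A → V} (hbal : netOutflow src tgt univ = 0) (U : Finset V) :
    #{a | (src a ∈ U ∧ tgt a ∉ U) ∨ (tgt a ∈ U ∧ src a ∉ U)} =
      2 * #{a | src a ∈ U ∧ tgt a ∉ U} := by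
  have hsum := sum_netOutflow (src := src) (tgt := tgt) univ U
  simp only [hbal, Pi.zero_apply, sum_const_zero] at hsum
  rw [filter_or, card_union_of_disjoint (disjoint_filter.2 fun _ _ h h' => h'.2 h.1)]
  omega

/-- In an eulerian digraph, if every edge cut of the underlying
undirected graph separating distinct vertices `s` and `t` has at least `4`
edges, then there is a directed euler circuit interlacing `s` and `t`,
i.e. whose vertex sequence contains `s, t, s, t` in that (cyclic) order. -/
theorem stmt_5 {V A : Type} [Fintype V] [Fintype A] (src tgt : A → V)
    (hbal : ∀ v : V, {a : A | tgt a = v}.ncard = {a : A | src a = v}.ncard)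
    (hconn : ∀ u v : V, ∃ l : List A, IsDiWalk src tgt u v l)
    (s t : V) (hst : s ≠ t)
    (hcut : ∀ U : Set V, s ∈ U → t ∉ U →
      4 ≤ {a : A | (src a ∈ U ∧ tgt a ∉ U) ∨ (tgt a ∈ U ∧ src a ∉ U)}.ncard) :
    ∃ (u : V) (l : List A), IsDiWalk src tgt u u l ∧ l.Nodup ∧
      (∀ a : A, a ∈ l) ∧ [s, t, s, t].Sublist (u :: l.map tgt) := by
  classical
  have hbal' : netOutflow src tgt univ = 0 := by
    ext v
    have := hbal v
    simp only [Set.ncard_eq_toFinset_card', Set.toFinset_ofPred] at this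
    simp [netOutflow_apply, this]
  have hcut' : ∀ U : Finset V, s ∈ U → t ∉ U → 2 ≤ #{a | src a ∈ U ∧ tgt a ∉ U} := by
    intro U hs ht
    have := hcut U hs ht
    simp only [Set.ncard_eq_toFinset_card', Set.toFinset_ofPred, mem_coe,
      card_cut_eq_two_mul hbal'] at this
    omega
  obtain ⟨F, hF⟩ := exists_netOutflow_eq_of_cut 2 hcut'
  rw [Nat.cast_ofNat] at hF
  have hFc : netOutflow src tgt (univ \ F) = Pi.single t 2 - Pi.single s 2 := by
    rw [netOutflow_sdiff (subset_univ F), hbal', hF, zero_sub, neg_sub]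
  obtain ⟨P₁, P₂, hP₁, hP₂, hP, hPF⟩ := exists_two_trails_of_netOutflow_eq hF
  obtain ⟨Q₁, Q₂, hQ₁, hQ₂, hQ, hQF⟩ := exists_two_trails_of_netOutflow_eq hFc
  have hC : (P₁ ++ (Q₁ ++ (P₂ ++ Q₂))).Nodup := by
    have : (P₁ ++ P₂ ++ (Q₁ ++ Q₂)).Nodup := List.nodup_append.2 ⟨hP, hQ,
      fun a ha b hb hab => (mem_sdiff.1 (hQF b hb)).2 (hab ▸ hPF a ha)⟩
    rwa [List.append_assoc, ← ((List.perm_append_comm_assoc _ _ _).append_left P₁).nodup_iff]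
      at this
  obtain ⟨L, hL, hLnd, hLall, hCL⟩ := exists_euler_circuit_sublist hbal' hconn
    (hP₁.append (hQ₁.append (hP₂.append hQ₂))) hC
  refine ⟨s, L, hL, hLnd, hLall, ((?_ : [t, s, t].Sublist _).trans (hCL.map tgt)).cons_cons s⟩
  simp only [List.map_append]
  exact (List.singleton_sublist.2 (hP₁.mem_map_tgt hst)).append
    ((List.singleton_sublist.2 (hQ₁.mem_map_tgt hst.symm)).append
      ((List.singleton_sublist.2 (hP₂.mem_map_tgt hst)).trans (List.sublist_append_left _ _)))
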